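/- Let 1≤q<∞ and φ ∈ G_q. Then there exists a constant C>0, depending only on n and q, such that for every measurable f:ℝⁿ→ℂ, ‖Mf‖_{wM^φ_q} ≤ C‖f‖_{M^φ_q}, where M is the uncentered Hardy–Littlewood maximal operator over Euclidean balls and ‖·‖_{wM^φ_q} is the weak generalized Morrey norm. -/

import Mathlib

open MeasureTheory Set
open scoped ENNReal NNReal

/-- The generalized Morrey norm `‖f‖_{M^φ_q}` on `ℝⁿ` (cubes realized as closed balls
for the sup metric on `Fin n → ℝ`). -/
noncomputable def morreyNorm (n : ℕ) (q : ℝ) (φ : ℝ → ℝ)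
    (f : (Fin n → ℝ) → ℂ) : ℝ≥0∞ :=
  ⨆ (x : Fin n → ℝ) (r : ℝ) (_ : 0 < r),
    ENNReal.ofReal (φ r) *
      ((volume (Metric.closedBall x r))⁻¹ *
        ∫⁻ y in Metric.closedBall x r, (‖f y‖₊ : ℝ≥0∞) ^ q) ^ (1 / q)

/-- The generalized Morrey norm of an `ℝ≥0∞`-valued function. -/
noncomputable def morreyNormE (n : ℕ) (q : ℝ) (φ : ℝ → ℝ)
    (F : (Fin n → ℝ) → ℝ≥0∞) : ℝ≥0∞ :=
  ⨆ (x : Fin n → ℝ) (r : ℝ) (_ : 0 < r),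
    ENNReal.ofReal (φ r) *
      ((volume (Metric.closedBall x r))⁻¹ *
        ∫⁻ y in Metric.closedBall x r, (F y) ^ q) ^ (1 / q)

/-- The weak generalized Morrey norm of an `ℝ≥0∞`-valued function:
`sup_{λ>0} λ ‖χ_{{F>λ}}‖_{M^φ_q}`. -/
noncomputable def weakMorreyNormE (n : ℕ) (q : ℝ) (φ : ℝ → ℝ)
    (F : (Fin n → ℝ) → ℝ≥0∞) : ℝ≥0∞ :=
  ⨆ (lam : ℝ) (_ : 0 < lam),
    ENNReal.ofReal lam *
      morreyNormE n q φ
        (Set.indicator {x | ENNReal.ofReal lam < F x} (fun _ => 1))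

/-- The class `G_q`: nondecreasing functions `φ : (0,∞) → (0,∞)` such that
`t ↦ t^{-n/q} φ(t)` is nonincreasing on `(0,∞)`. -/
def IsGq (n : ℕ) (q : ℝ) (φ : ℝ → ℝ) : Prop :=
  (∀ t, 0 < t → 0 < φ t) ∧
  (∀ s t, 0 < s → s ≤ t → φ s ≤ φ t) ∧
  (∀ s t, 0 < s → s ≤ t → t ^ (-((n : ℝ) / q)) * φ t ≤ s ^ (-((n : ℝ) / q)) * φ s)

/-- The (open) Euclidean ball in `Fin n → ℝ`. -/
def euclBall (n : ℕ) (c : Fin n → ℝ) (r : ℝ) : Set (Fin n → ℝ) :=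
  {y | Real.sqrt (∑ j, (y j - c j) ^ 2) < r}

/-- The uncentered Hardy--Littlewood maximal operator over Euclidean balls. -/
noncomputable def hlMaximal (n : ℕ) (f : (Fin n → ℝ) → ℂ)
    (x : Fin n → ℝ) : ℝ≥0∞ :=
  ⨆ (c : Fin n → ℝ) (r : ℝ) (_ : 0 < r) (_ : x ∈ euclBall n c r),
    (volume (euclBall n c r))⁻¹ * ∫⁻ y in euclBall n c r, (‖f y‖₊ : ℝ≥0∞)


/-!
Fix `λ > 0` and a cube `Q = Q(x, r)`. A Euclidean ball `B` of radius `ρ ≥ r / 2` has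
`φ(r) ⨍_B |f| ≤ K ‖f‖_{M^φ_q}`: Jensen on the concentric cube and `φ(r) ≤ 2^{n/q} φ(ρ)`.
So either `λ φ(r) ≤ K ‖f‖_{M^φ_q}`, which is the claim since `|{Mf > λ} ∩ Q| ≤ |Q|`, or
every ball with `⨍_B |f| > λ` meeting `Q` has radius `< r / 2`, hence lies in `Q(x, 2r)` and
satisfies `λ^q |B| ≤ ∫_B |f|^q`. A Vitali subfamily then gives
`λ^q |{Mf > λ} ∩ Q| ≤ 4^n ∫_{Q(x, 2r)} |f|^q ≤ 4^n φ(2r)^{-q} ‖f‖^q_{M^φ_q} |Q(x, 2r)|`,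
and `φ(r) ≤ φ(2r)`, `|Q(x, 2r)| = 2^n |Q|` finish the proof.
-/

open Metric WithLp

section EuclideanBall

variable {n : ℕ}

theorem euclBall_eq_preimage_toLp (c : Fin n → ℝ) (ρ : ℝ) :
    euclBall n c ρ = toLp 2 ⁻¹' ball (toLp 2 c) ρ := by
  ext y
  simp [euclBall, EuclideanSpace.dist_eq, Real.dist_eq, sq_abs]

theorem isOpen_euclBall (c : Fin n → ℝ) (ρ : ℝ) : IsOpen (euclBall n c ρ) := by
  rw [euclBall_eq_preimage_toLp]
  exact isOpen_ball.preimage (PiLp.continuous_toLp 2 _)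

theorem measurableSet_euclBall (c : Fin n → ℝ) (ρ : ℝ) : MeasurableSet (euclBall n c ρ) :=
  (isOpen_euclBall c ρ).measurableSet

theorem euclBall_subset_closedBall (c : Fin n → ℝ) (ρ : ℝ) :
    euclBall n c ρ ⊆ closedBall c ρ := by
  intro y hy
  rw [euclBall_eq_preimage_toLp, mem_preimage, mem_ball] at hy
  have h := (PiLp.antilipschitzWith_toLp 2 fun _ : Fin n => ℝ).le_mul_dist y c
  rw [NNReal.coe_one, one_mul] at h
  exact mem_closedBall.2 (h.trans hy.le)

theorem volume_euclBall (c : Fin n → ℝ) {ρ : ℝ} (hρ : 0 < ρ) :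
    volume (euclBall n c ρ) =
      ENNReal.ofReal (ρ ^ n) * volume (ball (0 : EuclideanSpace ℝ (Fin n)) 1) := by
  rw [euclBall_eq_preimage_toLp, (PiLp.volume_preserving_toLp _).measure_preimage
    measurableSet_ball.nullMeasurableSet, Measure.addHaar_ball_of_pos _ _ hρ,
    finrank_euclideanSpace_fin]

theorem volume_euclBall_ne_zero (c : Fin n → ℝ) {ρ : ℝ} (hρ : 0 < ρ) :
    volume (euclBall n c ρ) ≠ 0 :=
  (isOpen_euclBall c ρ).measure_ne_zero _ ⟨c, by simpa [euclBall] using hρ⟩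

theorem volume_euclBall_ne_top (c : Fin n → ℝ) (ρ : ℝ) : volume (euclBall n c ρ) ≠ ∞ :=
  ne_top_of_le_ne_top measure_closedBall_lt_top.ne (measure_mono (euclBall_subset_closedBall c ρ))

theorem volume_closedBall_div_volume_euclBall (c : Fin n → ℝ) {ρ : ℝ} (hρ : 0 < ρ) :
    volume (closedBall c ρ) / volume (euclBall n c ρ) =
      2 ^ n / volume (ball (0 : EuclideanSpace ℝ (Fin n)) 1) := by
  rw [Real.volume_pi_closedBall c hρ.le, volume_euclBall c hρ, Fintype.card_fin, mul_pow,
    ENNReal.ofReal_mul (by positivity), ENNReal.ofReal_pow zero_le_two, ENNReal.ofReal_ofNat,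
    mul_comm (ENNReal.ofReal _), ENNReal.mul_div_mul_right]
  · exact (ENNReal.ofReal_pos.2 (by positivity)).ne'
  · exact ENNReal.ofReal_ne_top

theorem volume_preimage_toLp_closedBall (c : Fin n → ℝ) {ρ : ℝ} (hρ : 0 < ρ) {s : ℝ}
    (hs : 0 ≤ s) :
    volume (toLp 2 ⁻¹' closedBall (toLp 2 c : EuclideanSpace ℝ (Fin n)) (s * ρ)) =
      ENNReal.ofReal (s ^ n) * volume (euclBall n c ρ) := by
  rw [(PiLp.volume_preserving_toLp _).measure_preimage measurableSet_closedBall.nullMeasurableSet,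
    Measure.addHaar_closedBall _ _ (by positivity), volume_euclBall c hρ, mul_pow,
    ENNReal.ofReal_mul (by positivity), mul_assoc, finrank_euclideanSpace_fin]

/-- The `4`-fold dilates of a disjoint Vitali subfamily cover the union of the balls. -/
theorem mul_volume_biUnion_euclBall_le {ι : Type*} (t : Set ι) (c : ι → Fin n → ℝ)
    (ρ : ι → ℝ) (hρ : ∀ i ∈ t, 0 < ρ i) (R : ℝ) (hR : ∀ i ∈ t, ρ i ≤ R)
    (a : ℝ≥0∞) (g : (Fin n → ℝ) → ℝ≥0∞)
    (hg : ∀ i ∈ t, a * volume (euclBall n (c i) (ρ i)) ≤ ∫⁻ y in euclBall n (c i) (ρ i), g y) :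
    a * volume (⋃ i ∈ t, euclBall n (c i) (ρ i)) ≤
      4 ^ n * ∫⁻ y in ⋃ i ∈ t, euclBall n (c i) (ρ i), g y := by
  obtain ⟨u, hut, hdisj, hcover⟩ :=
    Vitali.exists_disjoint_subfamily_covering_enlargement_closedBall t
      (fun i => (toLp 2 (c i) : EuclideanSpace ℝ (Fin n))) ρ R hR 4 (by norm_num)
  have hu : u.Countable := hdisj.countable_of_nonempty_interior fun i hi =>
    ⟨_, ball_subset_interior_closedBall (mem_ball_self (hρ i (hut hi)))⟩
  have hdisjBall : u.PairwiseDisjoint fun i => euclBall n (c i) (ρ i) := fun i hi j hj hij => by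
    simp only [Function.onFun, euclBall_eq_preimage_toLp]
    exact ((hdisj hi hj hij).preimage _).mono (preimage_mono ball_subset_closedBall)
      (preimage_mono ball_subset_closedBall)
  have hsub : ⋃ i ∈ t, euclBall n (c i) (ρ i) ⊆
      ⋃ j ∈ u, toLp 2 ⁻¹' closedBall (toLp 2 (c j) : EuclideanSpace ℝ (Fin n)) (4 * ρ j) := by
    refine iUnion₂_subset fun i hi y hy => ?_
    obtain ⟨j, hj, hij⟩ := hcover i hi
    rw [euclBall_eq_preimage_toLp] at hy
    exact mem_biUnion hj (hij (ball_subset_closedBall hy))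
  calc a * volume (⋃ i ∈ t, euclBall n (c i) (ρ i))
      ≤ a * ∑' j : u, volume (toLp 2 ⁻¹'
          closedBall (toLp 2 (c j) : EuclideanSpace ℝ (Fin n)) (4 * ρ j)) := by
        gcongr
        exact (measure_mono hsub).trans (measure_biUnion_le _ hu _)
    _ = 4 ^ n * ∑' j : u, a * volume (euclBall n (c j) (ρ j)) := by
        simp only [volume_preimage_toLp_closedBall _ (hρ _ (hut (Subtype.prop _)))
          (by norm_num : (0 : ℝ) ≤ 4), ENNReal.tsum_mul_left]
        rw [ENNReal.ofReal_pow (by norm_num), ENNReal.ofReal_ofNat]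
        ring
    _ ≤ 4 ^ n * ∑' j : u, ∫⁻ y in euclBall n (c j) (ρ j), g y := by
        gcongr with j
        exact hg j (hut j.2)
    _ = 4 ^ n * ∫⁻ y in ⋃ j ∈ u, euclBall n (c j) (ρ j), g y := by
        rw [lintegral_biUnion hu (fun j _ => measurableSet_euclBall _ _) hdisjBall]
    _ ≤ 4 ^ n * ∫⁻ y in ⋃ i ∈ t, euclBall n (c i) (ρ i), g y := by
        gcongr 4 ^ n * ?_
        exact lintegral_mono_set (biUnion_mono hut fun _ _ => subset_rfl)

theorem lowerSemicontinuous_hlMaximal (f : (Fin n → ℝ) → ℂ) :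
    LowerSemicontinuous (hlMaximal n f) := by
  intro x a ha
  simp only [hlMaximal, lt_iSup_iff] at ha
  obtain ⟨c, ρ, hρ, hx, hlt⟩ := ha
  filter_upwards [(isOpen_euclBall c ρ).mem_nhds hx] with y hy
  exact hlt.trans_le (le_iSup₂_of_le c ρ (le_iSup₂_of_le hρ hy le_rfl))

end EuclideanBall

section Averages

variable {α : Type*} [MeasurableSpace α] {μ : Measure α} {s : Set α} {q : ℝ} {g : α → ℝ≥0∞}

theorem inv_mul_setLIntegral_le_rpow (hq : 1 ≤ q) (hg : AEMeasurable g (μ.restrict s))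
    (hs0 : μ s ≠ 0) (hs : μ s ≠ ∞) :
    (μ s)⁻¹ * ∫⁻ x in s, g x ∂μ ≤ ((μ s)⁻¹ * ∫⁻ x in s, g x ^ q ∂μ) ^ (1 / q) := by
  have hq0 : 0 < q := zero_lt_one.trans_le hq
  have holder := eLpNorm_le_eLpNorm_mul_rpow_measure_univ (p := 1) (q := ENNReal.ofReal q)
    (by simpa using hq) hg.aestronglyMeasurable
  rw [eLpNorm_one_eq_lintegral_enorm, eLpNorm_eq_lintegral_rpow_enorm_toReal (by simpa using hq0)
    ENNReal.ofReal_ne_top, ENNReal.toReal_ofReal hq0.le, Measure.restrict_apply_univ] at holder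
  simp only [enorm_eq_self, ENNReal.toReal_one, div_one] at holder
  rw [ENNReal.mul_rpow_of_nonneg _ _ (by positivity)]
  calc (μ s)⁻¹ * ∫⁻ x in s, g x ∂μ
      ≤ (μ s)⁻¹ * ((∫⁻ x in s, g x ^ q ∂μ) ^ (1 / q) * μ s ^ (1 - 1 / q)) := by gcongr
    _ = ((μ s)⁻¹ * μ s ^ (1 - 1 / q)) * (∫⁻ x in s, g x ^ q ∂μ) ^ (1 / q) := by ring
    _ = (μ s)⁻¹ ^ (1 / q) * (∫⁻ x in s, g x ^ q ∂μ) ^ (1 / q) := by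
        rw [← ENNReal.rpow_neg_one, ← ENNReal.rpow_add _ _ hs0 hs, ← ENNReal.rpow_mul]
        ring_nf

theorem rpow_mul_measure_le_setLIntegral_rpow (hq : 1 ≤ q) (hg : AEMeasurable g (μ.restrict s))
    (hs0 : μ s ≠ 0) (hs : μ s ≠ ∞) {a : ℝ≥0∞} (h : a ≤ (μ s)⁻¹ * ∫⁻ x in s, g x ∂μ) :
    a ^ q * μ s ≤ ∫⁻ x in s, g x ^ q ∂μ := by
  have h := h.trans (inv_mul_setLIntegral_le_rpow hq hg hs0 hs)
  rw [one_div, ENNReal.le_rpow_inv_iff (zero_lt_one.trans_le hq)] at h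
  calc a ^ q * μ s ≤ (μ s)⁻¹ * (∫⁻ x in s, g x ^ q ∂μ) * μ s := by gcongr
    _ = ((μ s)⁻¹ * μ s) * ∫⁻ x in s, g x ^ q ∂μ := by ring
    _ ≤ ∫⁻ x in s, g x ^ q ∂μ := mul_le_of_le_one_left' (ENNReal.inv_mul_le_one _)

theorem setLIntegral_indicator_one_rpow {E : Set α} (hE : MeasurableSet E) (hq : 0 < q) :
    ∫⁻ y in s, E.indicator (fun _ => (1 : ℝ≥0∞)) y ^ q ∂μ = μ (E ∩ s) := by
  have h : ∀ y, E.indicator (fun _ => (1 : ℝ≥0∞)) y ^ q = E.indicator 1 y := by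
    intro y
    by_cases hy : y ∈ E <;> simp [hy, hq]
  simp_rw [h]
  rw [lintegral_indicator_one hE, Measure.restrict_apply hE]

end Averages

theorem ENNReal.mul_rpow_inv_mul_le_iff {q : ℝ} (hq : 0 < q) {a V I N : ℝ≥0∞} (hV0 : V ≠ 0)
    (hV : V ≠ ∞) : a * (V⁻¹ * I) ^ (1 / q) ≤ N ↔ a ^ q * I ≤ N ^ q * V := by
  rw [← ENNReal.rpow_le_rpow_iff hq, ENNReal.mul_rpow_of_nonneg _ _ hq.le, ← ENNReal.rpow_mul,
    one_div_mul_cancel hq.ne', ENNReal.rpow_one, mul_left_comm, ← ENNReal.div_eq_inv_mul,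
    ENNReal.div_le_iff hV0 hV]

section Morrey

variable {n : ℕ} {q : ℝ} {φ : ℝ → ℝ} {f : (Fin n → ℝ) → ℂ}

theorem IsGq.apply_le_two_rpow_mul (hφ : IsGq n q φ) {r ρ : ℝ} (hr : 0 < r) (hρ : 0 < ρ)
    (hrρ : r ≤ 2 * ρ) : φ r ≤ 2 ^ ((n : ℝ) / q) * φ ρ := by
  obtain ⟨-, hmono, hdecr⟩ := hφ
  have hdecr2 := hdecr ρ (2 * ρ) hρ (by linarith)
  rw [Real.mul_rpow zero_le_two hρ.le, mul_comm (2 ^ _), mul_assoc] at hdecr2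
  have hdoubling := le_of_mul_le_mul_left hdecr2 (by positivity)
  calc φ r ≤ φ (2 * ρ) := hmono r (2 * ρ) hr hrρ
    _ = 2 ^ ((n : ℝ) / q) * (2 ^ (-((n : ℝ) / q)) * φ (2 * ρ)) := by
        rw [← mul_assoc, ← Real.rpow_add zero_lt_two, add_neg_cancel, Real.rpow_zero, one_mul]
    _ ≤ 2 ^ ((n : ℝ) / q) * φ ρ := by gcongr

theorem le_morreyNorm (x : Fin n → ℝ) {r : ℝ} (hr : 0 < r) :
    ENNReal.ofReal (φ r) * ((volume (closedBall x r))⁻¹ *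
      ∫⁻ y in closedBall x r, (‖f y‖₊ : ℝ≥0∞) ^ q) ^ (1 / q) ≤ morreyNorm n q φ f :=
  le_iSup₂_of_le x r (le_iSup_of_le hr le_rfl)

theorem rpow_mul_lintegral_le_morreyNorm (hq : 0 < q) (x : Fin n → ℝ) {r : ℝ} (hr : 0 < r) :
    ENNReal.ofReal (φ r) ^ q * ∫⁻ y in closedBall x r, (‖f y‖₊ : ℝ≥0∞) ^ q ≤
      morreyNorm n q φ f ^ q * volume (closedBall x r) :=
  (ENNReal.mul_rpow_inv_mul_le_iff hq (measure_closedBall_pos _ x hr).ne'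
    measure_closedBall_lt_top.ne).1 (le_morreyNorm x hr)

variable (n q) in
/-- The `G_q` doubling factor `2^{n/q}` times the ratio `|Q(c, ρ)| / |B(c, ρ)|`. -/
noncomputable def largeBallConst : ℝ≥0∞ :=
  2 ^ ((n : ℝ) / q) * (2 ^ n / volume (ball (0 : EuclideanSpace ℝ (Fin n)) 1))

theorem largeBallConst_ne_top : largeBallConst n q ≠ ∞ :=
  ENNReal.mul_ne_top (by simp) (ENNReal.div_ne_top (by simp) (measure_ball_pos _ _ one_pos).ne')

theorem ofReal_mul_avg_euclBall_le (hq : 1 ≤ q) (hφ : IsGq n q φ) (hf : Measurable f)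
    (c : Fin n → ℝ) {r ρ : ℝ} (hr : 0 < r) (hρ : 0 < ρ) (hrρ : r ≤ 2 * ρ) :
    ENNReal.ofReal (φ r) *
        ((volume (euclBall n c ρ))⁻¹ * ∫⁻ y in euclBall n c ρ, (‖f y‖₊ : ℝ≥0∞)) ≤
      largeBallConst n q * morreyNorm n q φ f := by
  have hQ0 : volume (closedBall c ρ) ≠ 0 := (measure_closedBall_pos _ c hρ).ne'
  have hQ : volume (closedBall c ρ) ≠ ∞ := measure_closedBall_lt_top.ne
  have hφr : ENNReal.ofReal (φ r) ≤ 2 ^ ((n : ℝ) / q) * ENNReal.ofReal (φ ρ) := by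
    rw [← ENNReal.ofReal_ofNat 2, ENNReal.ofReal_rpow_of_pos zero_lt_two,
      ← ENNReal.ofReal_mul (by positivity)]
    exact ENNReal.ofReal_le_ofReal (hφ.apply_le_two_rpow_mul hr hρ hrρ)
  have hcube : (volume (euclBall n c ρ))⁻¹ * ∫⁻ y in euclBall n c ρ, (‖f y‖₊ : ℝ≥0∞) ≤
      volume (closedBall c ρ) / volume (euclBall n c ρ) *
        ((volume (closedBall c ρ))⁻¹ * ∫⁻ y in closedBall c ρ, (‖f y‖₊ : ℝ≥0∞)) := by
    rw [ENNReal.div_eq_inv_mul, mul_assoc, ← mul_assoc (volume _), ENNReal.mul_inv_cancel hQ0 hQ,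
      one_mul]
    gcongr
    exact euclBall_subset_closedBall c ρ
  have hJensen := inv_mul_setLIntegral_le_rpow hq hf.nnnorm.coe_nnreal_ennreal.aemeasurable hQ0 hQ
  calc ENNReal.ofReal (φ r) *
        ((volume (euclBall n c ρ))⁻¹ * ∫⁻ y in euclBall n c ρ, (‖f y‖₊ : ℝ≥0∞))
      ≤ 2 ^ ((n : ℝ) / q) * ENNReal.ofReal (φ ρ) *
          (volume (closedBall c ρ) / volume (euclBall n c ρ) *
            ((volume (closedBall c ρ))⁻¹ * ∫⁻ y in closedBall c ρ, (‖f y‖₊ : ℝ≥0∞) ^ q)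
              ^ (1 / q)) := mul_le_mul' hφr (hcube.trans (by gcongr))
    _ = largeBallConst n q * (ENNReal.ofReal (φ ρ) * ((volume (closedBall c ρ))⁻¹ *
            ∫⁻ y in closedBall c ρ, (‖f y‖₊ : ℝ≥0∞) ^ q) ^ (1 / q)) := by
        rw [largeBallConst, ← volume_closedBall_div_volume_euclBall c hρ]
        ring
    _ ≤ largeBallConst n q * morreyNorm n q φ f := by
        gcongr
        exact le_morreyNorm c hρ

theorem two_mul_le_of_lt_avg_euclBall (hq : 1 ≤ q) (hφ : IsGq n q φ) (hf : Measurable f)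
    {a : ℝ≥0∞} {r : ℝ} (hr : 0 < r)
    (hlarge : largeBallConst n q * morreyNorm n q φ f < a * ENNReal.ofReal (φ r))
    (c : Fin n → ℝ) {ρ : ℝ} (hρ : 0 < ρ)
    (hlt : a < (volume (euclBall n c ρ))⁻¹ * ∫⁻ y in euclBall n c ρ, (‖f y‖₊ : ℝ≥0∞)) :
    2 * ρ ≤ r := by
  by_contra! hρr
  refine (hlarge.trans_le ?_).false
  calc a * ENNReal.ofReal (φ r)
      ≤ ENNReal.ofReal (φ r) *
        ((volume (euclBall n c ρ))⁻¹ * ∫⁻ y in euclBall n c ρ, (‖f y‖₊ : ℝ≥0∞)) := by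
        rw [mul_comm]
        gcongr
    _ ≤ largeBallConst n q * morreyNorm n q φ f :=
        ofReal_mul_avg_euclBall_le hq hφ hf c hr hρ hρr.le

/-- Chebyshev on each ball, then Vitali. -/
theorem rpow_mul_volume_inter_closedBall_le (hq : 1 ≤ q) (hf : Measurable f) (a : ℝ≥0∞)
    (x : Fin n → ℝ) (r : ℝ)
    (hsmall : ∀ c ρ, 0 < ρ →
      a < (volume (euclBall n c ρ))⁻¹ * ∫⁻ y in euclBall n c ρ, (‖f y‖₊ : ℝ≥0∞) → 2 * ρ ≤ r) :
    a ^ q * volume ({y | a < hlMaximal n f y} ∩ closedBall x r) ≤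
      4 ^ n * ∫⁻ y in closedBall x (2 * r), (‖f y‖₊ : ℝ≥0∞) ^ q := by
  set t : Set ((Fin n → ℝ) × ℝ) := {p | 0 < p.2 ∧ (euclBall n p.1 p.2 ∩ closedBall x r).Nonempty ∧
    a < (volume (euclBall n p.1 p.2))⁻¹ * ∫⁻ y in euclBall n p.1 p.2, (‖f y‖₊ : ℝ≥0∞)}
  have hcover : {y | a < hlMaximal n f y} ∩ closedBall x r ⊆ ⋃ p ∈ t, euclBall n p.1 p.2 := by
    rintro y ⟨hy, hyQ⟩
    simp only [mem_ofPred_eq, hlMaximal, lt_iSup_iff] at hy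
    obtain ⟨c, ρ, hρ, hyB, hlt⟩ := hy
    exact mem_biUnion (x := (c, ρ)) ⟨hρ, ⟨y, hyB, hyQ⟩, hlt⟩ hyB
  have hsub : ⋃ p ∈ t, euclBall n p.1 p.2 ⊆ closedBall x (2 * r) := by
    refine iUnion₂_subset fun p ⟨hρ, ⟨w, hwB, hwQ⟩, hlt⟩ z hz => mem_closedBall.2 ?_
    linarith [hsmall p.1 p.2 hρ hlt, dist_triangle4 z p.1 w x, dist_comm p.1 w,
      mem_closedBall.1 (euclBall_subset_closedBall _ _ hz),
      mem_closedBall.1 (euclBall_subset_closedBall _ _ hwB), mem_closedBall.1 hwQ]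
  have hball : ∀ p ∈ t, a ^ q * volume (euclBall n p.1 p.2) ≤
      ∫⁻ y in euclBall n p.1 p.2, (‖f y‖₊ : ℝ≥0∞) ^ q := fun p hp =>
    rpow_mul_measure_le_setLIntegral_rpow hq hf.nnnorm.coe_nnreal_ennreal.aemeasurable
      (volume_euclBall_ne_zero _ hp.1) (volume_euclBall_ne_top _ _) hp.2.2.le
  calc a ^ q * volume ({y | a < hlMaximal n f y} ∩ closedBall x r)
      ≤ a ^ q * volume (⋃ p ∈ t, euclBall n p.1 p.2) := by gcongr
    _ ≤ 4 ^ n * ∫⁻ y in ⋃ p ∈ t, euclBall n p.1 p.2, (‖f y‖₊ : ℝ≥0∞) ^ q :=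
        mul_volume_biUnion_euclBall_le t Prod.fst Prod.snd (fun p hp => hp.1) (r / 2)
          (fun p hp => by linarith [hsmall p.1 p.2 hp.1 hp.2.2]) _ _ hball
    _ ≤ 4 ^ n * ∫⁻ y in closedBall x (2 * r), (‖f y‖₊ : ℝ≥0∞) ^ q := by
        gcongr 4 ^ n * ?_
        exact lintegral_mono_set hsub

theorem rpow_mul_volume_superlevel_inter_closedBall_le (hq : 1 ≤ q) (hφ : IsGq n q φ)
    (hf : Measurable f) {a : ℝ≥0∞} (x : Fin n → ℝ) {r : ℝ} (hr : 0 < r)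
    (hlarge : largeBallConst n q * morreyNorm n q φ f < a * ENNReal.ofReal (φ r)) :
    (a * ENNReal.ofReal (φ r)) ^ q * volume ({y | a < hlMaximal n f y} ∩ closedBall x r) ≤
      (8 ^ ((n : ℝ) / q) * morreyNorm n q φ f) ^ q * volume (closedBall x r) := by
  have hq0 : 0 < q := zero_lt_one.trans_le hq
  have hvol : volume (closedBall x (2 * r)) = 2 ^ n * volume (closedBall x r) := by
    rw [Real.volume_pi_closedBall _ (by positivity), Real.volume_pi_closedBall _ hr.le,
      Fintype.card_fin, ← ENNReal.ofReal_ofNat 2, ← ENNReal.ofReal_pow zero_le_two,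
      ← ENNReal.ofReal_mul (by positivity), ← mul_pow, ← mul_assoc]
  have h8 : ((8 : ℝ≥0∞) ^ ((n : ℝ) / q)) ^ q = 2 ^ n * 4 ^ n := by
    rw [← ENNReal.rpow_mul, div_mul_cancel₀ _ hq0.ne', ENNReal.rpow_natCast, ← mul_pow]
    norm_num
  calc (a * ENNReal.ofReal (φ r)) ^ q * volume ({y | a < hlMaximal n f y} ∩ closedBall x r)
      = ENNReal.ofReal (φ r) ^ q *
          (a ^ q * volume ({y | a < hlMaximal n f y} ∩ closedBall x r)) := by
        rw [ENNReal.mul_rpow_of_nonneg _ _ hq0.le]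
        ring
    _ ≤ ENNReal.ofReal (φ (2 * r)) ^ q *
          (4 ^ n * ∫⁻ y in closedBall x (2 * r), (‖f y‖₊ : ℝ≥0∞) ^ q) := by
        refine mul_le_mul' ?_ (rpow_mul_volume_inter_closedBall_le hq hf a x r
          fun c ρ hρ => two_mul_le_of_lt_avg_euclBall hq hφ hf hr hlarge c hρ)
        gcongr
        exact hφ.2.1 r (2 * r) hr (by linarith)
    _ ≤ 4 ^ n * (morreyNorm n q φ f ^ q * volume (closedBall x (2 * r))) := by
        rw [mul_left_comm]
        gcongr 4 ^ n * ?_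
        exact rpow_mul_lintegral_le_morreyNorm hq0 x (by positivity)
    _ = (8 ^ ((n : ℝ) / q) * morreyNorm n q φ f) ^ q * volume (closedBall x r) := by
        rw [ENNReal.mul_rpow_of_nonneg _ _ hq0.le, h8, hvol]
        ring

theorem ofReal_mul_superlevel_cube_le (hq : 1 ≤ q) (hφ : IsGq n q φ) (hf : Measurable f)
    (lam : ℝ) (x : Fin n → ℝ) {r : ℝ} (hr : 0 < r) :
    ENNReal.ofReal lam * (ENNReal.ofReal (φ r) * ((volume (closedBall x r))⁻¹ *
        volume ({y | ENNReal.ofReal lam < hlMaximal n f y} ∩ closedBall x r)) ^ (1 / q)) ≤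
      (largeBallConst n q + 8 ^ ((n : ℝ) / q)) * morreyNorm n q φ f := by
  have hQ0 : volume (closedBall x r) ≠ 0 := (measure_closedBall_pos _ x hr).ne'
  have hQ : volume (closedBall x r) ≠ ∞ := measure_closedBall_lt_top.ne
  rw [← mul_assoc, add_mul]
  by_cases hlarge : ENNReal.ofReal lam * ENNReal.ofReal (φ r) ≤
    largeBallConst n q * morreyNorm n q φ f
  · have hratio : (volume (closedBall x r))⁻¹ *
        volume ({y | ENNReal.ofReal lam < hlMaximal n f y} ∩ closedBall x r) ≤ 1 :=
      (mul_le_mul_right (measure_mono inter_subset_right) _).trans (ENNReal.inv_mul_le_one _)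
    calc _ ≤ ENNReal.ofReal lam * ENNReal.ofReal (φ r) * 1 :=
          mul_le_mul_right (ENNReal.rpow_le_one hratio (by positivity)) _
      _ ≤ _ := by rw [mul_one]; exact hlarge.trans le_self_add
  · push Not at hlarge
    exact ((ENNReal.mul_rpow_inv_mul_le_iff (zero_lt_one.trans_le hq) hQ0 hQ).2
      (rpow_mul_volume_superlevel_inter_closedBall_le hq hφ hf x hr hlarge)).trans le_add_self

end Morrey

/-- for `1 ≤ q < ∞` there is a constant `C > 0`, depending only
on `n` and `q`, such that for every `φ ∈ G_q` and every measurable `f`,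
`‖Mf‖_{wM^φ_q} ≤ C ‖f‖_{M^φ_q}`. -/
theorem maximal_weak_bounded_morrey (n : ℕ) (q : ℝ) (hq : 1 ≤ q) :
    ∃ C : ℝ, 0 < C ∧ ∀ φ : ℝ → ℝ, IsGq n q φ →
      ∀ f : (Fin n → ℝ) → ℂ, Measurable f →
        weakMorreyNormE n q φ (hlMaximal n f) ≤
          ENNReal.ofReal C * morreyNorm n q φ f := by
  set C : ℝ≥0∞ := largeBallConst n q + 8 ^ ((n : ℝ) / q)
  have hC0 : C ≠ 0 := by positivity
  have hC : C ≠ ∞ := ENNReal.add_ne_top.2 ⟨largeBallConst_ne_top, by simp⟩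
  refine ⟨C.toReal, ENNReal.toReal_pos hC0 hC, fun φ hφ f hf => ?_⟩
  rw [ENNReal.ofReal_toReal hC]
  simp only [weakMorreyNormE, morreyNormE, ENNReal.mul_iSup, iSup_le_iff]
  intro lam _ x r hr
  have hE : MeasurableSet {y | ENNReal.ofReal lam < hlMaximal n f y} :=
    ((lowerSemicontinuous_hlMaximal f).isOpen_preimage _).measurableSet
  rw [setLIntegral_indicator_one_rpow hE (zero_lt_one.trans_le hq)]
  exact ofReal_mul_superlevel_cube_le hq hφ hf lam x hr
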